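/- (Invariance of G under state-space reparametrization) Suppose the true model M*, estimated model M, and policy π are deterministic, and let G(s,a) = |V^{π,M}(M(s,a)) − V^{π,M}(M*(s,a))|. For any bijection 𝒯 of the state space, let M^𝒯(s,a) = 𝒯 M(𝒯⁻¹ s, a), M^{*,𝒯}(s,a) = 𝒯 M*(𝒯⁻¹ s, a), π^𝒯(s) = π(𝒯⁻¹ s), R^𝒯(s,a) = R(𝒯⁻¹ s, a), and G^𝒯(s′, a) = |V^{π^𝒯, M^𝒯}(M^𝒯(s′, a)) − V^{π^𝒯, M^𝒯}(M^{*,𝒯}(s′, a))| (value computed with reward R^𝒯). Then G^𝒯(𝒯 s, a) = G(s, a) for all s, a. -/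

import Mathlib

/-!
A bijection `𝒯` of the state space carries the trajectory of `(π, M)` from `s` onto the trajectory
of the conjugated pair from `𝒯 s`, and the conjugated reward reads the same rewards along it, so
every value, and hence `G`, is unchanged. Only the semiconjugacy identities `π' ∘ f = π`,
`M' (f s, a) = f (M (s, a))` and `R' (f s, π s) = R (s, π s)` enter, so `f = 𝒯` need not be
invertible for this.
-/

noncomputable section

/-- Deterministic trajectory: `s₀ = s`, `s_{t+1} = M(s_t, π(s_t))`. -/
def traj {S A : Type*} (π : S → A) (M : S × A → S) (s : S) : ℕ → S
  | 0 => s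
  | t + 1 => M (traj π M s t, π (traj π M s t))

/-- Value of a deterministic policy and model:
`V^{π,M}(s) = Σ_{t≥0} γ^t R(s_t, π(s_t))`. -/
def detValue {S A : Type*} (π : S → A) (M : S × A → S) (R : S × A → ℝ) (γ : ℝ)
    (s : S) : ℝ :=
  ∑' t : ℕ, γ ^ t * R (traj π M s t, π (traj π M s t))

/-- `G(s,a) = |V^{π,M}(M(s,a)) − V^{π,M}(M*(s,a))|`. -/
def Gdet {S A : Type*} (π : S → A) (M Mstar : S × A → S) (R : S × A → ℝ) (γ : ℝ)
    (s : S) (a : A) : ℝ :=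
  |detValue π M R γ (M (s, a)) - detValue π M R γ (Mstar (s, a))|

section Semiconj

variable {S S' A : Type*} {f : S → S'} {π : S → A} {π' : S' → A} {M : S × A → S}
  {M' : S' × A → S'} {R : S × A → ℝ} {R' : S' × A → ℝ}

theorem traj_semiconj (hπ : ∀ s, π' (f s) = π s)
    (hM : ∀ s, M' (f s, π s) = f (M (s, π s))) (s : S) (t : ℕ) :
    traj π' M' (f s) t = f (traj π M s t) := by
  induction t with
  | zero => rfl
  | succ t ih => rw [traj, traj, ih, hπ, hM]

theorem detValue_semiconj (hπ : ∀ s, π' (f s) = π s)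
    (hM : ∀ s, M' (f s, π s) = f (M (s, π s))) (hR : ∀ s, R' (f s, π s) = R (s, π s))
    (γ : ℝ) (s : S) :
    detValue π' M' R' γ (f s) = detValue π M R γ s := by
  simp only [detValue, traj_semiconj hπ hM, hπ, hR]

theorem Gdet_semiconj {Mstar : S × A → S} {Mstar' : S' × A → S'}
    (hπ : ∀ s, π' (f s) = π s) (hM : ∀ s a, M' (f s, a) = f (M (s, a)))
    (hMstar : ∀ s a, Mstar' (f s, a) = f (Mstar (s, a)))
    (hR : ∀ s, R' (f s, π s) = R (s, π s)) (γ : ℝ) (s : S) (a : A) :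
    Gdet π' M' Mstar' R' γ (f s) a = Gdet π M Mstar R γ s a := by
  simp only [Gdet, hM, hMstar, detValue_semiconj hπ (fun s => hM s (π s)) hR]

end Semiconj

theorem G_invariant_under_reparametrization_general
    {S S' A : Type*} (𝒯 : S ≃ S')
    (π : S → A) (M Mstar : S × A → S) (R : S × A → ℝ)
    (γ : ℝ) (s : S) (a : A) :
    Gdet (fun s' => π (𝒯.symm s'))
        (fun p => 𝒯 (M (𝒯.symm p.1, p.2)))
        (fun p => 𝒯 (Mstar (𝒯.symm p.1, p.2)))
        (fun p => R (𝒯.symm p.1, p.2)) γ (𝒯 s) a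
      = Gdet π M Mstar R γ s a :=
  Gdet_semiconj (f := 𝒯) (by simp) (by simp) (by simp) (by simp) γ s a

theorem G_invariant_under_reparametrization
    {S S' A : Type*} (𝒯 : S ≃ S')
    (π : S → A) (M Mstar : S × A → S) (R : S × A → ℝ)
    (C : ℝ) (hRbdd : ∀ x, |R x| ≤ C)
    (γ : ℝ) (hγ0 : 0 ≤ γ) (hγ1 : γ < 1) (s : S) (a : A) :
    Gdet (fun s' => π (𝒯.symm s'))
        (fun p => 𝒯 (M (𝒯.symm p.1, p.2)))
        (fun p => 𝒯 (Mstar (𝒯.symm p.1, p.2)))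
        (fun p => R (𝒯.symm p.1, p.2)) γ (𝒯 s) a
      = Gdet π M Mstar R γ s a :=
  G_invariant_under_reparametrization_general 𝒯 π M Mstar R γ s a

end
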